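/- There exists a truth assignment u ∈ {0,1}^m such that every clause C_1,…,C_n has at least one literal made true by u and at least one literal made false by u, if and only if the maximum of ⟨y,x⟩ over x ∈ SATP_LP(m,n) equals 3n and the maximum of ⟨y,z⟩ over the integral points z of SATP_LP(m,n) equals 3n. -/

import Mathlib

open Finset

/-- A point of ℝ^{6mn}: coordinates x^{k,l}_{i,j} with `i : Fin m`, `j : Fin n`,
`k : Fin 3` (the paper's k-1, since the paper indexes k ∈ {1,2,3}) and
`l : Fin 2` (the paper's l-1). -/
abbrev Pt (m n : ℕ) := Fin m → Fin n → Fin 3 → Fin 2 → ℝ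

/-- The relaxation polytope SATP_LP(m,n), given by the constraints (i)-(iv). -/
def SATPLP (m n : ℕ) : Set (Pt m n) :=
  {x | (∀ i j, ∑ k, ∑ l, x i j k l = 1) ∧
       (∀ i j t, ∑ k, x i j k 0 = ∑ k, x i t k 0) ∧
       (∀ k j i s, x i j k 0 + x i j k 1 = x s j k 0 + x s j k 1) ∧
       (∀ i j k l, 0 ≤ x i j k l)}

/-- The integral points of SATP_LP(m,n): the points all of whose coordinates are 0 or 1. -/
def IntPts (m n : ℕ) : Set (Pt m n) :=
  {x | x ∈ SATPLP m n ∧ ∀ i j k l, x i j k l = 0 ∨ x i j k l = 1}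

/-- SATP(m,n): the convex hull of the integral points of SATP_LP(m,n). -/
def SATP (m n : ℕ) : Set (Pt m n) := convexHull ℝ (IntPts m n)

/-- Standard inner product on ℝ^{6mn}. -/
def dotp {m n : ℕ} (v x : Pt m n) : ℝ :=
  ∑ i, ∑ j, ∑ k, ∑ l, v i j k l * x i j k l

/-- A 3-clause over m Boolean variables: the literal at each of the three places.
A literal is a pair (variable, sign) where sign `0` is positive (the paper's s = 1)
and sign `1` is negated (the paper's s = 2). -/
abbrev Clause (m : ℕ) := Fin 3 → Fin m × Fin 2

/-- Truth assignment u makes the literal (i,s) true iff s is positive and u i = 1,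
or s is negated and u i = 0. -/
def LitTrue {m : ℕ} (u : Fin m → Fin 2) (lit : Fin m × Fin 2) : Prop :=
  (lit.2 = 0 ∧ u lit.1 = 1) ∨ (lit.2 = 1 ∧ u lit.1 = 0)

/-- Sign flip, the paper's s ↦ 3 - s (also serving as u_i = 1 - r_i). -/
def flipSign (s : Fin 2) : Fin 2 := if s = 0 then 1 else 0

/-- The NAE-3SAT objective vector y: if clause C_j has literal (i,s) at place k then
y^{k,s}_{i,j} = 1, y^{k+1,3-s}_{i,j} = 1 and y^{k+2,1}_{i,j} = y^{k+2,2}_{i,j} = 1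
(places cyclically mod 3); all other coordinates are 0. Equivalently, position q gets a 1
at (i,s) from its own literal, at (i, flip s) from the literal at place q-1, and at
(i, both signs) from the literal at place q+1. -/
def yVec {m n : ℕ} (C : Fin n → Clause m) : Pt m n :=
  fun i j q s =>
    if C j q = (i, s) ∨ C j (q - 1) = (i, flipSign s) ∨ (C j (q + 1)).1 = i then 1 else 0

/-! Each cell (i, j) of a point of SATP_LP carries total mass 1, and y is a 0/1 vector supported
on the cells of the three variables of C_j, so ⟨y, x⟩ ≤ 3n. The constraints force an integral
point to put the single 1 of cell (i, j) at a place κ j depending only on the clause and at a sign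
r i depending only on the variable. With u = 1 - r, such a point attains 3n iff in every clause the
literal at place κ j is true and the one at place κ j - 1 is false; a not-all-equal assignment
provides such a κ, by picking in each clause a true literal cyclically preceded by a false one. -/

lemma litTrue_iff_ne {m : ℕ} (u : Fin m → Fin 2) (lit : Fin m × Fin 2) :
    LitTrue u lit ↔ u lit.1 ≠ lit.2 := by
  unfold LitTrue
  generalize u lit.1 = a; generalize lit.2 = b
  revert a b; decide

@[simp]
lemma flipSign_flipSign (s : Fin 2) : flipSign (flipSign s) = s := by
  revert s; decide

@[simp]
lemma eq_flipSign_iff {s t : Fin 2} : t = flipSign s ↔ t ≠ s := by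
  revert s t; decide

lemma exists_and_not_sub_one {P : Fin 3 → Prop} (h₁ : ∃ q, P q) (h₂ : ∃ q, ¬ P q) :
    ∃ q, P q ∧ ¬ P (q - 1) := by
  by_contra! h
  obtain ⟨q, hq⟩ := h₁
  obtain ⟨p, hp⟩ := h₂
  have hcover : ∀ p q : Fin 3, p = q ∨ p = q - 1 ∨ p = q - 1 - 1 := by decide
  rcases hcover p q with rfl | rfl | rfl
  exacts [hp hq, hp (h _ hq), hp (h _ (h _ hq))]

lemma exists_eq_ite_of_sum_eq_one {ι : Type*} [Fintype ι] [DecidableEq ι] {f : ι → ℝ}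
    (h01 : ∀ i, f i = 0 ∨ f i = 1) (hsum : ∑ i, f i = 1) :
    ∃ a, ∀ i, f i = if i = a then 1 else 0 := by
  have hnonneg : ∀ i ∈ univ, 0 ≤ f i := fun i _ => by rcases h01 i with h | h <;> simp [h]
  obtain ⟨a, ha⟩ : ∃ a, f a = 1 := by
    by_contra! h
    have : ∑ i, f i = 0 := sum_eq_zero fun i _ => (h01 i).resolve_right (h i)
    linarith
  refine ⟨a, fun i => ?_⟩
  split_ifs with hia
  · rwa [hia]
  · have := add_le_sum hnonneg (mem_univ i) (mem_univ a) hia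
    rcases h01 i with h | h <;> linarith

lemma exists_forall_eq_of_forall_eq {α β γ : Type*} [Nonempty γ] {f : α → β → γ}
    (h : ∀ a b b', f a b = f a b') : ∃ g : α → γ, ∀ a b, f a b = g a := by
  rcases isEmpty_or_nonempty β with hβ | ⟨⟨b₀⟩⟩
  · exact ⟨fun _ => Classical.arbitrary γ, fun _ b => isEmptyElim b⟩
  · exact ⟨fun a => f a b₀, fun a b => h a b b₀⟩

section IntegralPoints

variable {m n : ℕ}

def oneHot (a : Fin 3) (b : Fin 2) : Fin 3 → Fin 2 → ℝ :=
  fun k l => if k = a ∧ l = b then 1 else 0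

lemma sum_mul_oneHot (v : Fin 3 → Fin 2 → ℝ) (a : Fin 3) (b : Fin 2) :
    ∑ k, ∑ l, v k l * oneHot a b k l = v a b := by
  simp [oneHot, ite_and]

lemma sum_oneHot_zero (a : Fin 3) (b : Fin 2) :
    ∑ k, oneHot a b k 0 = if b = 0 then 1 else 0 := by
  simp [oneHot, ite_and, eq_comm]

lemma oneHot_zero_add_oneHot_one (a k : Fin 3) (b : Fin 2) :
    oneHot a b k 0 + oneHot a b k 1 = if k = a then 1 else 0 := by
  rcases Fin.exists_fin_two.mp ⟨b, rfl⟩ with rfl | rfl <;> simp [oneHot]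

lemma exists_oneHot_of_mem_intPts {z : Pt m n} (hz : z ∈ IntPts m n) (i : Fin m) (j : Fin n) :
    ∃ a b, z i j = oneHot a b := by
  obtain ⟨⟨a, b⟩, hab⟩ := exists_eq_ite_of_sum_eq_one (f := fun p : Fin 3 × Fin 2 => z i j p.1 p.2)
    (fun p => hz.2 i j p.1 p.2) (by rw [Fintype.sum_prod_type]; exact hz.1.1 i j)
  exact ⟨a, b, funext₂ fun k l => by simpa [oneHot] using hab (k, l)⟩

def integralPt (κ : Fin n → Fin 3) (r : Fin m → Fin 2) : Pt m n :=
  fun i j => oneHot (κ j) (r i)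

lemma integralPt_mem_intPts (κ : Fin n → Fin 3) (r : Fin m → Fin 2) :
    integralPt κ r ∈ IntPts m n := by
  refine ⟨⟨fun i j => ?_, fun i j t => ?_, fun k j i s => ?_, fun i j k l => ?_⟩, fun i j k l => ?_⟩
  · simp [integralPt, oneHot, ite_and]
  · simp only [integralPt, sum_oneHot_zero]
  · simp only [integralPt, oneHot_zero_add_oneHot_one]
  all_goals simp only [integralPt, oneHot]; split_ifs <;> norm_num

lemma exists_eq_integralPt_of_mem_intPts {z : Pt m n} (hz : z ∈ IntPts m n) :
    ∃ κ r, z = integralPt κ r := by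
  choose A B hAB using exists_oneHot_of_mem_intPts hz
  -- constraint (ii) makes the sign independent of the clause, (iii) the place of the variable
  have hB : ∀ i j j', B i j = B i j' := by
    intro i j j'
    have := hz.1.2.1 i j j'
    rw [hAB, hAB, sum_oneHot_zero, sum_oneHot_zero] at this
    split_ifs at this <;> first | omega | norm_num at this
  have hA : ∀ j i i', A i j = A i' j := by
    intro j i i'
    have := hz.1.2.2.1 (A i j) j i i'
    rw [hAB, hAB, oneHot_zero_add_oneHot_one, oneHot_zero_add_oneHot_one, if_pos rfl] at this
    split_ifs at this with h
    exacts [h, by norm_num at this]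
  obtain ⟨r, hr⟩ := exists_forall_eq_of_forall_eq hB
  obtain ⟨κ, hκ⟩ := exists_forall_eq_of_forall_eq hA
  exact ⟨κ, r, funext₂ fun i j => by rw [hAB, hr, hκ, integralPt]⟩

end IntegralPoints

section Objective

variable {m n : ℕ} (C : Fin n → Clause m)

lemma yVec_eq_one_iff {i : Fin m} {j : Fin n} {q : Fin 3} {t : Fin 2} :
    yVec C i j q t = 1 ↔
      C j q = (i, t) ∨ C j (q - 1) = (i, flipSign t) ∨ (C j (q + 1)).1 = i := by
  unfold yVec; split_ifs <;> simp [*]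

lemma yVec_le_one (i : Fin m) (j : Fin n) (k : Fin 3) (l : Fin 2) : yVec C i j k l ≤ 1 := by
  unfold yVec; split_ifs <;> norm_num

lemma yVec_eq_zero_of_forall_ne {i : Fin m} {j : Fin n} (h : ∀ p, (C j p).1 ≠ i)
    (k : Fin 3) (l : Fin 2) : yVec C i j k l = 0 := by
  unfold yVec
  rw [if_neg]
  rintro (h₁ | h₁ | h₁)
  exacts [h k (by rw [h₁]), h (k - 1) (by rw [h₁]), h (k + 1) h₁]

def clauseVars (c : Clause m) : Finset (Fin m) := univ.image fun p => (c p).1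

lemma sum_yVec_mul_eq_sum_clauseVars (x : Pt m n) (j : Fin n) :
    ∑ i, ∑ k, ∑ l, yVec C i j k l * x i j k l =
      ∑ i ∈ clauseVars (C j), ∑ k, ∑ l, yVec C i j k l * x i j k l := by
  refine (sum_subset (subset_univ _) fun i _ hi => ?_).symm
  have h : ∀ p, (C j p).1 ≠ i := fun p hp => hi (mem_image.2 ⟨p, mem_univ p, hp⟩)
  simp [yVec_eq_zero_of_forall_ne C h]

lemma dotp_yVec_le {x : Pt m n} (hx : x ∈ SATPLP m n) : dotp (yVec C) x ≤ 3 * n := by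
  have hcell : ∀ i j, ∑ k, ∑ l, yVec C i j k l * x i j k l ≤ 1 := fun i j =>
    calc ∑ k, ∑ l, yVec C i j k l * x i j k l ≤ ∑ k, ∑ l, x i j k l :=
          sum_le_sum fun k _ => sum_le_sum fun l _ =>
            mul_le_of_le_one_left (hx.2.2.2 i j k l) (yVec_le_one C i j k l)
      _ = 1 := hx.1 i j
  have hclause : ∀ j, ∑ i, ∑ k, ∑ l, yVec C i j k l * x i j k l ≤ 3 := fun j =>
    calc _ = ∑ i ∈ clauseVars (C j), ∑ k, ∑ l, yVec C i j k l * x i j k l :=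
          sum_yVec_mul_eq_sum_clauseVars C x j
      _ ≤ #(clauseVars (C j)) • (1 : ℝ) := sum_le_card_nsmul _ _ _ fun i _ => hcell i j
      _ ≤ 3 := by
          have : #(clauseVars (C j)) ≤ 3 := card_image_le.trans_eq (by simp)
          rw [nsmul_one]; exact_mod_cast this
  calc dotp (yVec C) x = ∑ j, ∑ i, ∑ k, ∑ l, yVec C i j k l * x i j k l := sum_comm
    _ ≤ ∑ _j : Fin n, (3 : ℝ) := sum_le_sum fun j _ => hclause j
    _ = 3 * n := by simp [mul_comm]

lemma dotp_yVec_integralPt (hdist : ∀ j, Function.Injective fun k => (C j k).1)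
    (κ : Fin n → Fin 3) (r : Fin m → Fin 2) :
    dotp (yVec C) (integralPt κ r) =
      ∑ j, ∑ p, yVec C (C j p).1 j (κ j) (r (C j p).1) := by
  rw [dotp, sum_comm]
  refine sum_congr rfl fun j _ => ?_
  rw [sum_yVec_mul_eq_sum_clauseVars, clauseVars, sum_image (hdist j).injOn]
  simp only [integralPt, sum_mul_oneHot]

/-- Since the variables of `C j` are distinct, the condition for `yVec` at the variable of place
`p` reduces to: its own literal for `p = q`, the flipped literal for `p = q - 1`, nothing for
`p = q + 1`. -/
lemma forall_yVec_eq_one_iff {j : Fin n} (hc : Function.Injective fun k => (C j k).1)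
    (q : Fin 3) (u : Fin m → Fin 2) :
    (∀ p, yVec C (C j p).1 j q (flipSign (u (C j p).1)) = 1) ↔
      LitTrue u (C j q) ∧ ¬ LitTrue u (C j (q - 1)) := by
  have hvar : ∀ a b, (C j a).1 = (C j b).1 ↔ a = b := fun a b => hc.eq_iff
  have hcases : ∀ p q : Fin 3, p = q ∨ p = q - 1 ∨ p = q + 1 := by decide
  obtain ⟨hq₁, hq₂, hq₃⟩ : q - 1 ≠ q ∧ q + 1 ≠ q ∧ q + 1 ≠ q - 1 := by revert q; decide
  simp only [yVec_eq_one_iff, litTrue_iff_ne, Prod.ext_iff, hvar]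
  constructor
  · intro h
    have h₀ := h q
    have h₁ := h (q - 1)
    simp [hq₁, hq₂, hq₃, hq₁.symm] at h₀ h₁
    exact ⟨Ne.symm h₀, not_not.2 h₁.symm⟩
  · rintro ⟨h₀, h₁⟩ p
    rcases hcases p q with rfl | rfl | rfl
    · simpa [hq₁.symm, hq₂.symm] using h₀.symm
    · simp [hq₁.symm, (not_not.1 h₁).symm]
    · simp

lemma dotp_yVec_integralPt_eq_iff (hdist : ∀ j, Function.Injective fun k => (C j k).1)
    (κ : Fin n → Fin 3) (u : Fin m → Fin 2) :
    dotp (yVec C) (integralPt κ (flipSign ∘ u)) = 3 * n ↔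
      ∀ j, LitTrue u (C j (κ j)) ∧ ¬ LitTrue u (C j (κ j - 1)) := by
  have h3n : (3 * n : ℝ) = ∑ _j : Fin n, ∑ _p : Fin 3, (1 : ℝ) := by simp [mul_comm]
  rw [dotp_yVec_integralPt C hdist, h3n,
    sum_eq_sum_iff_of_le fun j _ => sum_le_sum fun p _ => yVec_le_one C _ _ _ _]
  refine forall_congr' fun j => ?_
  rw [sum_eq_sum_iff_of_le fun p _ => yVec_le_one C _ _ _ _]
  simpa using forall_yVec_eq_one_iff C (hdist j) (κ j) u

end Objective

/-- there is a truth assignment making at least one literal true and at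
least one literal false in every clause iff the maximum of ⟨y,x⟩ over SATP_LP(m,n)
equals 3n and the maximum of ⟨y,z⟩ over the integral points equals 3n. -/
theorem stmt7 (m n : ℕ) (C : Fin n → Clause m)
    (hdist : ∀ j, Function.Injective fun k => (C j k).1) :
    (∃ u : Fin m → Fin 2, ∀ j,
        (∃ k, LitTrue u (C j k)) ∧ (∃ k, ¬ LitTrue u (C j k))) ↔
      (IsGreatest (dotp (yVec C) '' SATPLP m n) (3 * (n : ℝ)) ∧
       IsGreatest (dotp (yVec C) '' IntPts m n) (3 * (n : ℝ))) := by
  constructor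
  · rintro ⟨u, hu⟩
    choose κ hκ using fun j => exists_and_not_sub_one (hu j).1 (hu j).2
    have hval := (dotp_yVec_integralPt_eq_iff C hdist κ u).2 hκ
    have hmem := integralPt_mem_intPts κ (flipSign ∘ u)
    exact ⟨⟨⟨_, hmem.1, hval⟩, Set.forall_mem_image.2 fun x hx => dotp_yVec_le C hx⟩,
      ⟨⟨_, hmem, hval⟩, Set.forall_mem_image.2 fun x hx => dotp_yVec_le C hx.1⟩⟩
  · rintro ⟨-, ⟨z, hz, hval⟩, -⟩
    obtain ⟨κ, r, rfl⟩ := exists_eq_integralPt_of_mem_intPts hz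
    rw [← show flipSign ∘ (flipSign ∘ r) = r from funext fun i => flipSign_flipSign (r i),
      dotp_yVec_integralPt_eq_iff C hdist] at hval
    exact ⟨flipSign ∘ r, fun j => ⟨⟨_, (hval j).1⟩, ⟨_, (hval j).2⟩⟩⟩
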